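/- Fix $p\in(0,1)$ and define $\Phi(a,s)=p(1-p)(2-s)^2(s-a)-a(1-s)$. Then for every $a\in[0,1]$ there is a unique $s\in[a,1]$ with $\Phi(a,s)=0$; moreover if $a\in\{0,1\}$ this solution is $s=a$, and if $a\in(0,1)$ then the solution $s$ satisfies $0<a<s<1$. -/
import Mathlib


open Set

def paperPhi (p a s : ℝ) : ℝ := p * (1 - p) * (2 - s) ^ 2 * (s - a) - a * (1 - s)

lemma phi_uniq (q a s t : ℝ) (hq : 0 < q) (ha : 0 ≤ a)
    (hs0 : a ≤ s) (hs1 : s ≤ 1) (ht0 : a ≤ t) (ht1 : t ≤ 1)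
    (h1 : q * (2 - s) ^ 2 * (s - a) - a * (1 - s) = 0)
    (h2 : q * (2 - t) ^ 2 * (t - a) - a * (1 - t) = 0) : s = t := by
  have hs0' : 0 ≤ s := le_trans ha hs0
  have ht0' : 0 ≤ t := le_trans ha ht0
  have key : q * (t - s) * (q * (2 - s) ^ 2 * (2 - t) ^ 2 +
      ((2 - s - t) ^ 2 + s * t * (3 - s - t))) = 0 := by
    linear_combination (q * (2 - s) ^ 2 + (1 - s)) * h2 - (q * (2 - t) ^ 2 + (1 - t)) * h1
  have hA : 0 < q * (2 - s) ^ 2 * (2 - t) ^ 2 := by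
    apply mul_pos (mul_pos hq (by nlinarith)) (by nlinarith)
  have hB : 0 ≤ s * t * (3 - s - t) := by
    apply mul_nonneg (mul_nonneg hs0' ht0'); linarith
  have hpos : 0 < q * (2 - s) ^ 2 * (2 - t) ^ 2 +
      ((2 - s - t) ^ 2 + s * t * (3 - s - t)) := by nlinarith [sq_nonneg (2 - s - t)]
  have hts : q * (t - s) = 0 := by
    rcases mul_eq_zero.mp key with h | h
    · exact h
    · exact absurd h (ne_of_gt hpos)
  rcases mul_eq_zero.mp hts with h | h
  · exact absurd h (ne_of_gt hq)
  · linarith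

theorem stmt_4 (p : ℝ) (hp : p ∈ Set.Ioo (0 : ℝ) 1) (a : ℝ) (ha : a ∈ Set.Icc (0 : ℝ) 1) :
    (∃! s, s ∈ Set.Icc a 1 ∧ paperPhi p a s = 0) ∧
    (∀ s, s ∈ Set.Icc a 1 → paperPhi p a s = 0 →
      ((a = 0 ∨ a = 1) → s = a) ∧ (a ∈ Set.Ioo (0 : ℝ) 1 → a < s ∧ s < 1)) := by
  obtain ⟨hp0, hp1⟩ := hp
  obtain ⟨ha0, ha1⟩ := ha
  have hq : 0 < p * (1 - p) := mul_pos hp0 (by linarith)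
  constructor
  · -- existence and uniqueness
    have hcont : ContinuousOn (fun s => paperPhi p a s) (Set.Icc a 1) := by
      unfold paperPhi; fun_prop
    have hfa : paperPhi p a a ≤ 0 := by
      unfold paperPhi; nlinarith
    have hfb : 0 ≤ paperPhi p a 1 := by
      unfold paperPhi; nlinarith
    have := intermediate_value_Icc ha1 hcont
    have h0 : (0 : ℝ) ∈ (fun s => paperPhi p a s) '' Set.Icc a 1 :=
      this ⟨hfa, hfb⟩
    obtain ⟨s, hsmem, hs0⟩ := h0
    refine ⟨s, ⟨hsmem, hs0⟩, ?_⟩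
    rintro t ⟨htmem, ht0⟩
    exact phi_uniq (p * (1 - p)) a t s hq ha0 htmem.1 htmem.2 hsmem.1 hsmem.2
      (by simpa [paperPhi] using ht0) (by simpa [paperPhi] using hs0)
  · rintro s ⟨hsa, hs1⟩ hphi
    unfold paperPhi at hphi
    constructor
    · rintro (rfl | rfl)
      · by_contra h
        have hs : 0 < s := lt_of_le_of_ne hsa (Ne.symm h)
        nlinarith [mul_pos (mul_pos hq (show (0:ℝ) < (2 - s) ^ 2 by nlinarith)) hs]
      · linarith
    · rintro ⟨haa0, haa1⟩
      constructor
      · rcases lt_or_eq_of_le hsa with h | h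
        · exact h
        · exfalso; subst h; nlinarith
      · rcases lt_or_eq_of_le hs1 with h | h
        · exact h
        · exfalso; subst h; nlinarith
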